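/- arXiv:2410.20641 — 6 statements merged into one kernel-verified Lean document; each statement's English description precedes it below -/
import Mathlib

section
/- Fix z₀ > 1 and ω ∈ ℝ. Suppose g: ℝ → (0, ∞) satisfies k₁ · q(z; γ', δ', α', β') ≤ g(z) ≤ K₁ · q(z; γ', δ', α', β') for all z ∈ ℝ with constants 0 < k₁ ≤ K₁, where γ' > 0 and δ' > 0, and suppose π: ℝ → (0, ∞) satisfies k₂ · q(z; 0, 0, α, β) ≤ π(z) ≤ K₂ · q(z; 0, 0, α, β) for all z ∈ ℝ with constants 0 < k₂ ≤ K₂. Then there exist constants 0 < k ≤ K such that for all t ∈ ℝ: k · q(t − ω; γ', δ', α + α', β + β') ≤ π(t) · g(t − ω) ≤ K · q(t − ω; γ', δ', α + α', β + β'). In particular, the posterior density π(t | ω) ∝ π(t) g(t − ω) has p-credence (γ', δ', α + α', β + β'). -/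
/-- The generalized exponential power kernel
`q(z; γ, δ, α, β) = max(|z|, z₀)^α (log max(|z|, z₀))^β exp(-δ max(|z|, z₀)^γ)`. -/
noncomputable def gepKernel (z₀ γ δ α β z : ℝ) : ℝ :=
  max |z| z₀ ^ α * Real.log (max |z| z₀) ^ β * Real.exp (-δ * max |z| z₀ ^ γ)

lemma rpow_le_abs_mul_rpow {L x y β : ℝ} (hL : 1 ≤ L) (hy : 0 < y)
    (h1 : x ≤ L * y) (h2 : y ≤ L * x) : x ^ β ≤ L ^ |β| * y ^ β := by
  have hL0 : 0 < L := lt_of_lt_of_le one_pos hL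
  have hx : 0 < x := by nlinarith
  rcases le_or_gt 0 β with hβ | hβ
  · rw [abs_of_nonneg hβ]
    calc x ^ β ≤ (L * y) ^ β := Real.rpow_le_rpow hx.le h1 hβ
    _ = L ^ β * y ^ β := Real.mul_rpow hL0.le hy.le
  · rw [abs_of_neg hβ]
    have hyx : y / L ≤ x := by rw [div_le_iff₀ hL0]; nlinarith
    have hyL : 0 < y / L := div_pos hy hL0
    calc x ^ β ≤ (y / L) ^ β := Real.rpow_le_rpow_of_nonpos hyL hyx hβ.le
    _ = y ^ β / L ^ β := Real.div_rpow hy.le hL0.le β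
    _ = L ^ (-β) * y ^ β := by rw [Real.rpow_neg hL0.le]; ring


/-- p-credence of the posterior in the location model: if the likelihood kernel `g` has
p-credence `(γ', δ', α', β')` with `γ', δ' > 0` and the prior `p` has p-credence
`(0, 0, α, β)`, then the (unnormalized) posterior `t ↦ p t * g (t - ω)` has p-credence
`(γ', δ', α + α', β + β')`. -/
theorem posterior_p_credence (z₀ : ℝ) (hz₀ : 1 < z₀) (ω : ℝ)
    (γ' δ' α' β' α β : ℝ) (hγ' : 0 < γ') (hδ' : 0 < δ')
    (g p : ℝ → ℝ) (hg_pos : ∀ z, 0 < g z) (hp_pos : ∀ z, 0 < p z)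
    (k₁ K₁ : ℝ) (hk₁ : 0 < k₁) (hk₁K₁ : k₁ ≤ K₁)
    (hg : ∀ z, k₁ * gepKernel z₀ γ' δ' α' β' z ≤ g z ∧
      g z ≤ K₁ * gepKernel z₀ γ' δ' α' β' z)
    (k₂ K₂ : ℝ) (hk₂ : 0 < k₂) (hk₂K₂ : k₂ ≤ K₂)
    (hp : ∀ z, k₂ * gepKernel z₀ 0 0 α β z ≤ p z ∧
      p z ≤ K₂ * gepKernel z₀ 0 0 α β z) :
    ∃ k K : ℝ, 0 < k ∧ k ≤ K ∧
      ∀ t : ℝ, k * gepKernel z₀ γ' δ' (α + α') (β + β') (t - ω) ≤ p t * g (t - ω) ∧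
        p t * g (t - ω) ≤ K * gepKernel z₀ γ' δ' (α + α') (β + β') (t - ω) := by
  -- comparison constants
  set L : ℝ := 1 + |ω| with hLdef
  have hL : 1 ≤ L := by rw [hLdef]; linarith [abs_nonneg ω]
  have hL0 : 0 < L := lt_of_lt_of_le one_pos hL
  have hlogz₀ : 0 < Real.log z₀ := Real.log_pos hz₀
  set C : ℝ := 1 + Real.log L / Real.log z₀ with hCdef
  have hC : 1 ≤ C := by
    have h1 : 0 ≤ Real.log L := Real.log_nonneg hL
    have h2 : 0 ≤ Real.log L / Real.log z₀ := by positivity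
    rw [hCdef]; linarith
  have hC0 : 0 < C := lt_of_lt_of_le one_pos hC
  set D : ℝ := L ^ |α| * C ^ |β| with hDdef
  have hD1 : 1 ≤ D := by
    have h1 : 1 ≤ L ^ |α| := Real.one_le_rpow hL (abs_nonneg α)
    have h2 : 1 ≤ C ^ |β| := Real.one_le_rpow hC (abs_nonneg β)
    nlinarith
  have hD0 : 0 < D := lt_of_lt_of_le one_pos hD1
  clear_value D C L
  refine ⟨k₁ * k₂ / D, K₁ * K₂ * D, by positivity, ?_, fun t => ?_⟩
  · have hK₁ : 0 < K₁ := lt_of_lt_of_le hk₁ hk₁K₁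
    have hK₂ : 0 < K₂ := lt_of_lt_of_le hk₂ hk₂K₂
    calc k₁ * k₂ / D ≤ k₁ * k₂ := by
          rw [div_le_iff₀ hD0]; nlinarith [mul_pos hk₁ hk₂]
    _ ≤ K₁ * K₂ := by nlinarith
    _ ≤ K₁ * K₂ * D := by nlinarith [mul_pos hK₁ hK₂]
  -- pointwise comparison
  set A : ℝ := max |t| z₀ with hAdef
  set B : ℝ := max |t - ω| z₀ with hBdef
  have hzA : z₀ ≤ A := le_max_right _ _
  have hzB : z₀ ≤ B := le_max_right _ _
  have hA1 : 1 < A := lt_of_lt_of_le hz₀ hzA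
  have hB1 : 1 < B := lt_of_lt_of_le hz₀ hzB
  have hA0 : 0 < A := lt_trans one_pos hA1
  have hB0 : 0 < B := lt_trans one_pos hB1
  -- A and B comparable within factor L
  have hAB : A ≤ L * B := by
    have h1 : |t| ≤ |t - ω| + |ω| := by
      calc |t| = |(t - ω) + ω| := by ring_nf
      _ ≤ |t - ω| + |ω| := abs_add_le _ _
    have h2 : A ≤ B + |ω| := by
      rcases max_cases |t| z₀ with ⟨h, _⟩ | ⟨h, _⟩
      · rw [hAdef, h]; have := le_max_left |t - ω| z₀; linarith [abs_nonneg ω]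
      · rw [hAdef, h]; linarith [abs_nonneg ω]
    nlinarith [abs_nonneg ω]
  have hBA : B ≤ L * A := by
    have h1 : |t - ω| ≤ |t| + |ω| := by
      calc |t - ω| ≤ |t| + |(-ω)| := abs_add_le t (-ω) |>.trans_eq (by rw [abs_neg])
      _ = |t| + |ω| := by rw [abs_neg]
    have h2 : B ≤ A + |ω| := by
      rcases max_cases |t - ω| z₀ with ⟨h, _⟩ | ⟨h, _⟩
      · rw [hBdef, h]; have := le_max_left |t| z₀; linarith [abs_nonneg ω]
      · rw [hBdef, h]; linarith [abs_nonneg ω]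
    nlinarith [abs_nonneg ω]
  -- logs comparable within factor C
  have hlogA : 0 < Real.log A := Real.log_pos hA1
  have hlogB : 0 < Real.log B := Real.log_pos hB1
  have hlogzA : Real.log z₀ ≤ Real.log A := Real.log_le_log (lt_trans one_pos hz₀) hzA
  have hlogzB : Real.log z₀ ≤ Real.log B := Real.log_le_log (lt_trans one_pos hz₀) hzB
  have hlogL : 0 ≤ Real.log L := Real.log_nonneg hL
  have hlogAB : Real.log A ≤ C * Real.log B := by
    have h1 : Real.log A ≤ Real.log (L * B) := Real.log_le_log hA0 hAB
    rw [Real.log_mul (ne_of_gt hL0) (ne_of_gt hB0)] at h1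
    have h2 : Real.log L ≤ Real.log L / Real.log z₀ * Real.log B := by
      rw [div_mul_eq_mul_div, le_div_iff₀ hlogz₀]
      exact mul_le_mul_of_nonneg_left hlogzB hlogL
    have h3 : (1 + Real.log L / Real.log z₀) * Real.log B
        = Real.log B + Real.log L / Real.log z₀ * Real.log B := by ring
    rw [hCdef, h3]; linarith
  have hlogBA : Real.log B ≤ C * Real.log A := by
    have h1 : Real.log B ≤ Real.log (L * A) := Real.log_le_log hB0 hBA
    rw [Real.log_mul (ne_of_gt hL0) (ne_of_gt hA0)] at h1
    have h2 : Real.log L ≤ Real.log L / Real.log z₀ * Real.log A := by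
      rw [div_mul_eq_mul_div, le_div_iff₀ hlogz₀]
      exact mul_le_mul_of_nonneg_left hlogzA hlogL
    have h3 : (1 + Real.log L / Real.log z₀) * Real.log A
        = Real.log A + Real.log L / Real.log z₀ * Real.log A := by ring
    rw [hCdef, h3]; linarith
  -- rpow comparisons
  have hα1 : A ^ α ≤ L ^ |α| * B ^ α := rpow_le_abs_mul_rpow hL hB0 hAB hBA
  have hα2 : B ^ α ≤ L ^ |α| * A ^ α := rpow_le_abs_mul_rpow hL hA0 hBA hAB
  have hβ1 : Real.log A ^ β ≤ C ^ |β| * Real.log B ^ β :=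
    rpow_le_abs_mul_rpow hC hlogB hlogAB hlogBA
  have hβ2 : Real.log B ^ β ≤ C ^ |β| * Real.log A ^ β :=
    rpow_le_abs_mul_rpow hC hlogA hlogBA hlogAB
  -- positivity of various powers
  have hAα : 0 < A ^ α := Real.rpow_pos_of_pos hA0 α
  have hBα : 0 < B ^ α := Real.rpow_pos_of_pos hB0 α
  have hBα' : 0 < B ^ α' := Real.rpow_pos_of_pos hB0 α'
  have hlAβ : 0 < Real.log A ^ β := Real.rpow_pos_of_pos hlogA β
  have hlBβ : 0 < Real.log B ^ β := Real.rpow_pos_of_pos hlogB β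
  have hlBβ' : 0 < Real.log B ^ β' := Real.rpow_pos_of_pos hlogB β'
  have hE : 0 < Real.exp (-δ' * B ^ γ') := Real.exp_pos _
  -- kernel identities
  have hker0 : gepKernel z₀ 0 0 α β t = A ^ α * Real.log A ^ β := by
    simp [gepKernel, hAdef]
  have hker1 : gepKernel z₀ γ' δ' α' β' (t - ω)
      = B ^ α' * Real.log B ^ β' * Real.exp (-δ' * B ^ γ') := rfl
  have hker2 : gepKernel z₀ γ' δ' (α + α') (β + β') (t - ω)
      = (B ^ α * Real.log B ^ β) * (B ^ α' * Real.log B ^ β' * Real.exp (-δ' * B ^ γ')) := by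
    show B ^ (α + α') * Real.log B ^ (β + β') * Real.exp (-δ' * B ^ γ') = _
    rw [Real.rpow_add hB0, Real.rpow_add hlogB]; ring
  have hgt := hg (t - ω)
  have hpt := hp t
  rw [hker0] at hpt
  rw [hker1] at hgt
  have hgl := hgt.1
  have hgu := hgt.2
  have hpl := hpt.1
  have hpu := hpt.2
  have hgpos := hg_pos (t - ω)
  have hppos := hp_pos t
  constructor
  · rw [hker2]
    have key : B ^ α * Real.log B ^ β ≤ D * (A ^ α * Real.log A ^ β) := by
      rw [hDdef]
      calc B ^ α * Real.log B ^ β ≤ (L ^ |α| * A ^ α) * (C ^ |β| * Real.log A ^ β) := by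
            apply mul_le_mul hα2 hβ2 hlBβ.le
            positivity
      _ = L ^ |α| * C ^ |β| * (A ^ α * Real.log A ^ β) := by ring
    have hEpos : 0 < B ^ α' * Real.log B ^ β' * Real.exp (-δ' * B ^ γ') := by positivity
    calc k₁ * k₂ / D * ((B ^ α * Real.log B ^ β) * (B ^ α' * Real.log B ^ β' * Real.exp (-δ' * B ^ γ')))
        ≤ k₁ * k₂ / D * ((D * (A ^ α * Real.log A ^ β)) * (B ^ α' * Real.log B ^ β' * Real.exp (-δ' * B ^ γ'))) := by
          apply mul_le_mul_of_nonneg_left _ (by positivity)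
          apply mul_le_mul_of_nonneg_right key hEpos.le
    _ = (k₂ * (A ^ α * Real.log A ^ β)) * (k₁ * (B ^ α' * Real.log B ^ β' * Real.exp (-δ' * B ^ γ'))) := by
          field_simp
    _ ≤ p t * g (t - ω) := by
          apply mul_le_mul hpl hgl (by positivity) hppos.le
  · rw [hker2]
    have key : A ^ α * Real.log A ^ β ≤ D * (B ^ α * Real.log B ^ β) := by
      rw [hDdef]
      calc A ^ α * Real.log A ^ β ≤ (L ^ |α| * B ^ α) * (C ^ |β| * Real.log B ^ β) := by
            apply mul_le_mul hα1 hβ1 hlAβ.le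
            positivity
      _ = L ^ |α| * C ^ |β| * (B ^ α * Real.log B ^ β) := by ring
    have hK₂ : 0 < K₂ := lt_of_lt_of_le hk₂ hk₂K₂
    have hK₁ : 0 < K₁ := lt_of_lt_of_le hk₁ hk₁K₁
    calc p t * g (t - ω)
        ≤ (K₂ * (A ^ α * Real.log A ^ β)) * (K₁ * (B ^ α' * Real.log B ^ β' * Real.exp (-δ' * B ^ γ'))) := by
          apply mul_le_mul hpu hgu hgpos.le (by positivity)
    _ ≤ (K₂ * (D * (B ^ α * Real.log B ^ β))) * (K₁ * (B ^ α' * Real.log B ^ β' * Real.exp (-δ' * B ^ γ'))) := by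
          apply mul_le_mul_of_nonneg_right _ (by positivity)
          apply mul_le_mul_of_nonneg_left key hK₂.le
    _ = K₁ * K₂ * D * ((B ^ α * Real.log B ^ β) * (B ^ α' * Real.log B ^ β' * Real.exp (-δ' * B ^ γ'))) := by ring
end

section
/- Curse of a single observation: let π be a probability density on ℝ with credence c, i.e., there are constants 0 < k' ≤ K' with k' ≤ (1 + t²)^{c/2} π(t) ≤ K' for all t ∈ ℝ; let σ > 0, L(ω | t) = (2πσ²)^{−1/2} exp(−(ω − t)²/(2σ²)), m(ω) = ∫_ℝ π(t) L(ω | t) dt, and π(t | ω) = π(t) L(ω | t)/m(ω). Then for every d > 0 and every A > 0 there exist constants 0 < C₁ ≤ C₂ < ∞ such that for all ω with |ω| ≤ A and all t with |t| ≤ d: C₁ · L(ω | t) ≤ π(t | ω) ≤ C₂ · L(ω | t). -/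
open MeasureTheory

lemma curse_rpow_bounds {x B e : ℝ} (h1 : 1 ≤ x) (hB : x ≤ B) :
    min 1 (B ^ e) ≤ x ^ e ∧ x ^ e ≤ max 1 (B ^ e) := by
  have hx0 : (0:ℝ) < x := by linarith
  rcases le_or_gt 0 e with he | he
  · exact ⟨le_trans (min_le_left _ _) (Real.one_le_rpow h1 he),
      le_trans (Real.rpow_le_rpow (by linarith) hB he) (le_max_right _ _)⟩
  · constructor
    · exact le_trans (min_le_right _ _) (Real.rpow_le_rpow_of_nonpos hx0 hB he.le)
    · refine le_trans ?_ (le_max_left _ _)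
      calc x ^ e ≤ 1 ^ e := Real.rpow_le_rpow_of_nonpos one_pos h1 he.le
        _ = 1 := Real.one_rpow e

/-- Curse of a single observation: for a prior density `p` with credence `c` and the normal
location likelihood `L(ω | t)`, the posterior density `π(t | ω) = p t * L ω t / m ω` is
bounded above and below by positive multiples of the likelihood, uniformly over bounded
regions `|ω| ≤ A`, `|t| ≤ d`. -/
theorem curse_of_single_observation (p : ℝ → ℝ) (hmeas : Measurable p)
    (hprob : ∫ t : ℝ, p t = 1)
    (c k' K' : ℝ) (hk' : 0 < k') (hk'K' : k' ≤ K')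
    (hcred : ∀ t : ℝ, k' ≤ (1 + t ^ 2) ^ (c / 2) * p t ∧ (1 + t ^ 2) ^ (c / 2) * p t ≤ K')
    (σ : ℝ) (hσ : 0 < σ)
    (L : ℝ → ℝ → ℝ)
    (hL : ∀ ω t : ℝ, L ω t =
      (2 * Real.pi * σ ^ 2) ^ (-(1 : ℝ) / 2) * Real.exp (-(ω - t) ^ 2 / (2 * σ ^ 2)))
    (m : ℝ → ℝ) (hm : ∀ ω : ℝ, m ω = ∫ t : ℝ, p t * L ω t)
    (post : ℝ → ℝ → ℝ) (hpost : ∀ t ω : ℝ, post t ω = p t * L ω t / m ω)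
    (d A : ℝ) (hd : 0 < d) (hA : 0 < A) :
    ∃ C₁ C₂ : ℝ, 0 < C₁ ∧ C₁ ≤ C₂ ∧
      ∀ ω t : ℝ, |ω| ≤ A → |t| ≤ d →
        C₁ * L ω t ≤ post t ω ∧ post t ω ≤ C₂ * L ω t := by
  have hπ : (0:ℝ) < Real.pi := Real.pi_pos
  set Cσ : ℝ := (2 * Real.pi * σ ^ 2) ^ (-(1 : ℝ) / 2) with hCσdef
  have hCσ : 0 < Cσ := Real.rpow_pos_of_pos (by positivity) _
  -- basic bounds on L
  have hLpos : ∀ ω t : ℝ, 0 < L ω t := by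
    intro ω t; rw [hL]; positivity
  have hLub : ∀ ω t : ℝ, L ω t ≤ Cσ := by
    intro ω t; rw [hL]
    nth_rewrite 2 [show Cσ = Cσ * 1 by ring]
    refine mul_le_mul_of_nonneg_left ?_ hCσ.le
    rw [← Real.exp_zero]
    apply Real.exp_le_exp.mpr
    have : (0:ℝ) ≤ (ω - t)^2 := sq_nonneg _
    have : (0:ℝ) < 2 * σ^2 := by positivity
    apply div_nonpos_of_nonpos_of_nonneg <;> nlinarith
  set Lmin : ℝ := Cσ * Real.exp (-(A+1)^2 / (2*σ^2)) with hLmindef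
  have hLminpos : 0 < Lmin := by positivity
  have hLlb : ∀ ω t : ℝ, |ω| ≤ A → |t| ≤ 1 → Lmin ≤ L ω t := by
    intro ω t hω ht
    rw [hL, hLmindef]
    refine mul_le_mul_of_nonneg_left ?_ hCσ.le
    apply Real.exp_le_exp.mpr
    have h1 : |ω - t| ≤ A + 1 := (abs_sub _ _).trans (by linarith)
    have h2 : (ω - t)^2 ≤ (A+1)^2 := sq_le_sq' (by cases abs_le.mp h1; linarith) (abs_le.mp h1).2
    have h3 : (0:ℝ) < 2 * σ^2 := by positivity
    gcongr
  -- positivity and bounds of p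
  have hgpos : ∀ t : ℝ, (0:ℝ) < (1 + t ^ 2) ^ (c / 2) := by
    intro t; exact Real.rpow_pos_of_pos (by positivity) _
  have hppos : ∀ t : ℝ, 0 < p t := by
    intro t
    have h := (hcred t).1
    nlinarith [hgpos t]
  have hplb : ∀ B t : ℝ, 1 ≤ B → |t| ≤ Real.sqrt (B - 1) →
      k' / max 1 (B ^ (c/2)) ≤ p t := by
    intro B t hB ht
    have h1 : t^2 ≤ B - 1 := by
      calc t^2 = |t|^2 := (sq_abs t).symm
        _ ≤ (Real.sqrt (B-1))^2 := pow_le_pow_left₀ (abs_nonneg t) ht 2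
        _ = B - 1 := Real.sq_sqrt (by linarith)
    have h2 : (1:ℝ) ≤ 1 + t^2 := by nlinarith [sq_nonneg t]
    have h3 : 1 + t^2 ≤ B := by linarith
    obtain ⟨hlo, hhi⟩ := curse_rpow_bounds (e := c/2) h2 h3
    have hcr := (hcred t).1
    have hmaxpos : (0:ℝ) < max 1 (B ^ (c/2)) := lt_of_lt_of_le one_pos (le_max_left _ _)
    rw [div_le_iff₀ hmaxpos]
    calc k' ≤ (1 + t^2)^(c/2) * p t := hcr
      _ ≤ max 1 (B ^ (c/2)) * p t := mul_le_mul_of_nonneg_right hhi (hppos t).le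
      _ = p t * max 1 (B ^ (c/2)) := mul_comm _ _
  have hpub : ∀ B t : ℝ, 1 ≤ B → |t| ≤ Real.sqrt (B - 1) →
      p t ≤ K' / min 1 (B ^ (c/2)) := by
    intro B t hB ht
    have h1 : t^2 ≤ B - 1 := by
      calc t^2 = |t|^2 := (sq_abs t).symm
        _ ≤ (Real.sqrt (B-1))^2 := pow_le_pow_left₀ (abs_nonneg t) ht 2
        _ = B - 1 := Real.sq_sqrt (by linarith)
    have h2 : (1:ℝ) ≤ 1 + t^2 := by nlinarith [sq_nonneg t]
    have h3 : 1 + t^2 ≤ B := by linarith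
    obtain ⟨hlo, hhi⟩ := curse_rpow_bounds (e := c/2) h2 h3
    have hcr := (hcred t).2
    have hminpos : (0:ℝ) < min 1 (B ^ (c/2)) := lt_min one_pos (Real.rpow_pos_of_pos (by linarith) _)
    rw [le_div_iff₀ hminpos]
    calc p t * min 1 (B ^ (c/2)) = min 1 (B ^ (c/2)) * p t := mul_comm _ _
      _ ≤ (1 + t^2)^(c/2) * p t := mul_le_mul_of_nonneg_right hlo (hppos t).le
      _ ≤ K' := hcr
  -- integrability of p
  have hInt : Integrable p := by
    by_contra h
    rw [integral_undef h] at hprob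
    norm_num at hprob
  -- integrability of p * L ω
  have hIntL : ∀ ω : ℝ, Integrable (fun t => p t * L ω t) := by
    intro ω
    have : (fun t => p t * L ω t) =
        fun t => (Cσ * Real.exp (-(ω - t)^2 / (2*σ^2))) * p t := by
      funext t; rw [hL]; ring
    rw [this]
    refine hInt.bdd_mul (c := Cσ) ?_ (Filter.Eventually.of_forall fun t => ?_)
    · exact (Continuous.aestronglyMeasurable (by fun_prop))
    · rw [Real.norm_eq_abs, abs_of_pos (by positivity)]
      calc Cσ * Real.exp (-(ω - t)^2 / (2*σ^2)) = L ω t := by rw [hL]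
        _ ≤ Cσ := hLub ω t
  -- upper bound on m
  have hmub : ∀ ω : ℝ, m ω ≤ Cσ := by
    intro ω
    rw [hm]
    calc (∫ t : ℝ, p t * L ω t) ≤ ∫ t : ℝ, p t * Cσ := by
          refine integral_mono (hIntL ω) (hInt.mul_const Cσ) fun t => ?_
          exact mul_le_mul_of_nonneg_left (hLub ω t) (hppos t).le
      _ = Cσ := by rw [integral_mul_const, hprob, one_mul]
  -- lower bound on m
  set pmin1 : ℝ := k' / max 1 ((2:ℝ) ^ (c/2)) with hpmin1def
  have hpmin1pos : 0 < pmin1 := div_pos hk' (lt_of_lt_of_le one_pos (le_max_left _ _))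
  set mlo : ℝ := 2 * (pmin1 * Lmin) with hmlodef
  have hmlopos : 0 < mlo := by positivity
  have hmlb : ∀ ω : ℝ, |ω| ≤ A → mlo ≤ m ω := by
    intro ω hω
    rw [hm]
    have hnn : 0 ≤ᵐ[volume] fun t => p t * L ω t :=
      Filter.Eventually.of_forall fun t => mul_nonneg (hppos t).le (hLpos ω t).le
    have hstep : mlo ≤ ∫ t in Set.Icc (-1:ℝ) 1, p t * L ω t := by
      have hconst : ∫ _ in Set.Icc (-1:ℝ) 1, (pmin1 * Lmin) = 2 * (pmin1 * Lmin) := by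
        rw [setIntegral_const, Real.volume_real_Icc, smul_eq_mul]
        norm_num [ENNReal.toReal_ofReal]
      rw [hmlodef, ← hconst]
      refine setIntegral_mono_on ((integrableOn_const_iff (C := pmin1 * Lmin)).mpr ?_) ((hIntL ω).integrableOn)
        measurableSet_Icc fun t ht => ?_
      · right; rw [Real.volume_Icc]; norm_num
      · obtain ⟨ht1, ht2⟩ := ht
        have htabs : |t| ≤ 1 := abs_le.mpr ⟨ht1, ht2⟩
        have hp1 : pmin1 ≤ p t := by
          have := hplb 2 t (by norm_num) (by
            rw [show (2:ℝ) - 1 = 1 by norm_num, Real.sqrt_one]; exact htabs)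
          exact this
        exact mul_le_mul hp1 (hLlb ω t hω htabs) hLminpos.le (hppos t).le
    refine hstep.trans (setIntegral_le_integral (hIntL ω) hnn)
  have hmpos : ∀ ω : ℝ, |ω| ≤ A → 0 < m ω := fun ω hω => lt_of_lt_of_le hmlopos (hmlb ω hω)
  -- constants
  have hBd : (1:ℝ) ≤ 1 + d^2 := by nlinarith
  set pdmin : ℝ := k' / max 1 ((1 + d^2) ^ (c/2)) with hpdmindef
  set pdmax : ℝ := K' / min 1 ((1 + d^2) ^ (c/2)) with hpdmaxdef
  have hpdminpos : 0 < pdmin := div_pos hk' (lt_of_lt_of_le one_pos (le_max_left _ _))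
  have hpdmaxpos : 0 < pdmax :=
    div_pos (lt_of_lt_of_le hk' hk'K') (lt_min one_pos (Real.rpow_pos_of_pos (by linarith) _))
  refine ⟨pdmin / Cσ, max (pdmin / Cσ) (pdmax / mlo), div_pos hpdminpos hCσ, le_max_left _ _,
    fun ω t hω ht => ?_⟩
  have hsq : |t| ≤ Real.sqrt ((1 + d^2) - 1) := by
    rw [show (1 + d^2) - 1 = d^2 by ring, Real.sqrt_sq hd.le]; exact ht
  have hpl : pdmin ≤ p t := hplb (1 + d^2) t hBd hsq
  have hpu : p t ≤ pdmax := hpub (1 + d^2) t hBd hsq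
  have hmω := hmpos ω hω
  have hLp := hLpos ω t
  constructor
  · rw [hpost]
    calc pdmin / Cσ * L ω t = pdmin * L ω t / Cσ := by ring
      _ ≤ p t * L ω t / m ω :=
        div_le_div₀ (mul_nonneg (hppos t).le hLp.le)
          (mul_le_mul_of_nonneg_right hpl hLp.le) hmω (hmub ω)
  · rw [hpost]
    calc p t * L ω t / m ω ≤ pdmax * L ω t / mlo :=
        div_le_div₀ (mul_nonneg hpdmaxpos.le hLp.le)
          (mul_le_mul_of_nonneg_right hpu hLp.le) hmlopos (hmlb ω hω)
      _ = pdmax / mlo * L ω t := by ring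
      _ ≤ max (pdmin / Cσ) (pdmax / mlo) * L ω t :=
        mul_le_mul_of_nonneg_right (le_max_right _ _) hLp.le
end

section
/- Let π and g be probability densities on ℝ with credences c and c' respectively, where 1 < c < c'. Define the marginal m(y) = ∫_ℝ π(r) g(r − y) dr and the posterior tail probability P(x | ω) = (m(ω^{−1}))^{−1} ∫_x^∞ π(r) g(r − ω^{−1}) dr. Then for every a > 1, lim_{ω → 0⁺} P(a ω^{−1} | ω) = 0. -/
open MeasureTheory Filter

/-- A density `f` on `ℝ` has credence `c` if `(1 + x²)^(c/2) f(x)` is bounded above and below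
by positive constants. -/
def HasCredence (f : ℝ → ℝ) (c : ℝ) : Prop :=
  ∃ k K : ℝ, 0 < k ∧ k ≤ K ∧
    ∀ x : ℝ, k ≤ (1 + x ^ 2) ^ (c / 2) * f x ∧ (1 + x ^ 2) ^ (c / 2) * f x ≤ K

private lemma cred_le {f : ℝ → ℝ} {c K : ℝ} (h : ∀ x, (1 + x ^ 2) ^ (c / 2) * f x ≤ K)
    (x : ℝ) : f x ≤ K * (1 + x ^ 2) ^ (-(c / 2)) := by
  have h1 : (0:ℝ) < 1 + x ^ 2 := by positivity
  have hA : (0:ℝ) < (1 + x ^ 2) ^ (c / 2) := Real.rpow_pos_of_pos h1 _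
  rw [Real.rpow_neg h1.le, ← div_eq_mul_inv, le_div_iff₀ hA, mul_comm]
  exact h x

private lemma cred_ge {f : ℝ → ℝ} {c k : ℝ} (h : ∀ x, k ≤ (1 + x ^ 2) ^ (c / 2) * f x)
    (x : ℝ) : k * (1 + x ^ 2) ^ (-(c / 2)) ≤ f x := by
  have h1 : (0:ℝ) < 1 + x ^ 2 := by positivity
  have hA : (0:ℝ) < (1 + x ^ 2) ^ (c / 2) := Real.rpow_pos_of_pos h1 _
  rw [Real.rpow_neg h1.le, ← div_eq_mul_inv, div_le_iff₀ hA, mul_comm]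
  exact h x

private lemma sq_rpow {x : ℝ} (hx : 0 ≤ x) (e : ℝ) : (x ^ 2) ^ e = x ^ (2 * e) := by
  rw [← Real.rpow_natCast x 2, ← Real.rpow_mul hx]
  norm_num

private lemma int_bound {s : ℝ} (hs : 1 < s) :
    Integrable (fun x : ℝ => (1 + x ^ 2) ^ (-(s / 2))) := by
  have h := integrable_rpow_neg_one_add_norm_sq (E := ℝ) (μ := volume) (r := s)
    (by simpa using hs)
  simpa [Real.norm_eq_abs, sq_abs, neg_div] using h

/-- If the prior density `p` has credence `c` and the location likelihood kernel `g` has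
credence `c'` with `1 < c < c'`, then for every `a > 1` the posterior probability
`P(r > a/ω | ω)` tends to `0` as the parallax `ω → 0⁺`. -/
theorem posterior_tail_beyond_inverse_parallax_vanishes
    (p g : ℝ → ℝ) (hp_meas : Measurable p) (hg_meas : Measurable g)
    (hp_prob : ∫ x : ℝ, p x = 1) (hg_prob : ∫ x : ℝ, g x = 1)
    (c c' : ℝ) (hc : 1 < c) (hcc' : c < c')
    (hp_cred : HasCredence p c) (hg_cred : HasCredence g c') :
    ∀ a : ℝ, 1 < a →
      Tendsto (fun ω : ℝ =>
          (∫ r in Set.Ioi (a * ω⁻¹), p r * g (r - ω⁻¹)) /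
            (∫ r : ℝ, p r * g (r - ω⁻¹)))
        (nhdsWithin 0 (Set.Ioi 0)) (nhds 0) := by
  obtain ⟨k₁, K₁, hk₁, hkK₁, hP⟩ := hp_cred
  obtain ⟨k₂, K₂, hk₂, hkK₂, hG⟩ := hg_cred
  have hK₁ : 0 < K₁ := lt_of_lt_of_le hk₁ hkK₁
  have hK₂ : 0 < K₂ := lt_of_lt_of_le hk₂ hkK₂
  have hc'1 : 1 < c' := hc.trans hcc'
  -- pointwise positivity and bounds
  have hp_pos : ∀ x, 0 < p x := fun x =>
    lt_of_lt_of_le (by positivity) (cred_ge (fun x => (hP x).1) x)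
  have hg_pos : ∀ x, 0 < g x := fun x =>
    lt_of_lt_of_le (by positivity) (cred_ge (fun x => (hG x).1) x)
  have hp_bdd : ∀ x, p x ≤ K₁ := by
    intro x
    refine (cred_le (fun x => (hP x).2) x).trans ?_
    have h1 : (1 + x ^ 2 : ℝ) ^ (-(c / 2)) ≤ 1 :=
      Real.rpow_le_one_of_one_le_of_nonpos (by nlinarith [sq_nonneg x]) (by linarith)
    nlinarith
  -- integrability
  have hg_int : Integrable g := by
    refine ((int_bound hc'1).const_mul K₂).mono' hg_meas.aestronglyMeasurable
      (ae_of_all _ fun x => ?_)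
    rw [Real.norm_eq_abs, abs_of_nonneg (hg_pos x).le]
    exact cred_le (fun x => (hG x).2) x
  have hInt : ∀ y : ℝ, Integrable (fun r => p r * g (r - y)) := by
    intro y
    refine ((hg_int.comp_sub_right y).const_mul K₁).mono'
      ((hp_meas.mul (hg_meas.comp (measurable_id.sub_const y))).aestronglyMeasurable)
      (ae_of_all _ fun x => ?_)
    rw [Real.norm_eq_abs, abs_of_nonneg (mul_nonneg (hp_pos x).le (hg_pos _).le)]
    exact mul_le_mul_of_nonneg_right (hp_bdd x) (hg_pos _).le
  intro a ha
  set δ : ℝ := 1 - a⁻¹ with hδdef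
  have ha0 : (0:ℝ) < a := by linarith
  have hδ : 0 < δ := by
    have : a⁻¹ < 1 := by rw [inv_lt_one_iff₀]; right; exact ha
    simp [hδdef]; linarith
  set s : ℝ := c + c' with hsdef
  have hs1 : 1 < s := by simp only [hsdef]; linarith
  set C₁ : ℝ := k₁ * (2:ℝ) ^ (-(c / 2)) * k₂ * (2:ℝ) ^ (-(c' / 2)) with hC₁def
  set C₂ : ℝ := K₁ * (K₂ * δ ^ (-c')) * (a ^ (1 - s) / (s - 1)) with hC₂def
  have hC₁ : 0 < C₁ := by
    have h2 : (0:ℝ) < (2:ℝ) ^ (-(c / 2)) := Real.rpow_pos_of_pos two_pos _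
    have h3 : (0:ℝ) < (2:ℝ) ^ (-(c' / 2)) := Real.rpow_pos_of_pos two_pos _
    rw [hC₁def]; positivity
  have hC₂ : 0 < C₂ := by
    have h1 : (0:ℝ) < δ ^ (-c') := Real.rpow_pos_of_pos hδ _
    have h2 : (0:ℝ) < a ^ (1 - s) := Real.rpow_pos_of_pos ha0 _
    have h3 : (0:ℝ) < s - 1 := by linarith
    rw [hC₂def]; positivity
  -- lower bound for the denominator
  have hD_lb : ∀ y : ℝ, 1 ≤ y → C₁ * y ^ (-c') ≤ ∫ r : ℝ, p r * g (r - y) := by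
    intro y hy
    have hy0 : (0:ℝ) < y := lt_of_lt_of_le one_pos hy
    have step1 : ∫ r in Set.Ioc (0:ℝ) 1, p r * g (r - y) ≤ ∫ r : ℝ, p r * g (r - y) :=
      setIntegral_le_integral (hInt y)
        (ae_of_all _ fun r => mul_nonneg (hp_pos r).le (hg_pos _).le)
    have ptw : ∀ r ∈ Set.Ioc (0:ℝ) 1,
        (k₁ * 2 ^ (-(c / 2))) * (k₂ * (1 + y ^ 2) ^ (-(c' / 2))) ≤ p r * g (r - y) := by
      intro r hr
      have h1r : (0:ℝ) < 1 + r ^ 2 := by positivity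
      have hb1 : (1:ℝ) + r ^ 2 ≤ 2 := by nlinarith [hr.1, hr.2]
      have hp' : k₁ * 2 ^ (-(c / 2)) ≤ p r := by
        refine le_trans ?_ (cred_ge (fun x => (hP x).1) r)
        have h := Real.rpow_le_rpow_of_nonpos h1r hb1 (by linarith : -(c / 2) ≤ 0)
        exact mul_le_mul_of_nonneg_left h hk₁.le
      have hsq : (r - y) ^ 2 ≤ y ^ 2 :=
        sq_le_sq' (by linarith [hr.1]) (by linarith [hr.2])
      have hg' : k₂ * (1 + y ^ 2) ^ (-(c' / 2)) ≤ g (r - y) := by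
        refine le_trans ?_ (cred_ge (fun x => (hG x).1) (r - y))
        have h := Real.rpow_le_rpow_of_nonpos
          (by positivity : (0:ℝ) < 1 + (r - y) ^ 2)
          (by linarith : (1:ℝ) + (r - y) ^ 2 ≤ 1 + y ^ 2)
          (by linarith : -(c' / 2) ≤ 0)
        exact mul_le_mul_of_nonneg_left h hk₂.le
      have hpr0 : (0:ℝ) ≤ k₁ * 2 ^ (-(c / 2)) := by positivity
      exact mul_le_mul hp' hg'
        (by positivity) (hp_pos r).le
    have step2 : (k₁ * 2 ^ (-(c / 2))) * (k₂ * (1 + y ^ 2) ^ (-(c' / 2)))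
        ≤ ∫ r in Set.Ioc (0:ℝ) 1, p r * g (r - y) := by
      have h := setIntegral_mono_on
        ((integrableOn_const_iff).mpr (Or.inr (by simp [Real.volume_Ioc])))
        ((hInt y).integrableOn) measurableSet_Ioc ptw
      simpa [Real.volume_Ioc] using h
    have hconv : C₁ * y ^ (-c')
        ≤ (k₁ * 2 ^ (-(c / 2))) * (k₂ * (1 + y ^ 2) ^ (-(c' / 2))) := by
      have h1 : (1:ℝ) + y ^ 2 ≤ 2 * y ^ 2 := by nlinarith
      have h2 : ((2:ℝ) * y ^ 2) ^ (-(c' / 2)) ≤ (1 + y ^ 2) ^ (-(c' / 2)) :=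
        Real.rpow_le_rpow_of_nonpos (by positivity) h1 (by linarith)
      have h3 : (2:ℝ) ^ (-(c' / 2)) * y ^ (-c') = (2 * y ^ 2) ^ (-(c' / 2)) := by
        rw [Real.mul_rpow (by norm_num) (by positivity), sq_rpow hy0.le,
          show 2 * (-(c' / 2)) = -c' by ring]
      have h4 : (2:ℝ) ^ (-(c' / 2)) * y ^ (-c') ≤ (1 + y ^ 2) ^ (-(c' / 2)) :=
        h3.le.trans h2
      calc C₁ * y ^ (-c')
          = (k₁ * 2 ^ (-(c / 2)) * k₂) * ((2:ℝ) ^ (-(c' / 2)) * y ^ (-c')) := by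
            rw [hC₁def]; ring
        _ ≤ (k₁ * 2 ^ (-(c / 2)) * k₂) * (1 + y ^ 2) ^ (-(c' / 2)) := by
            refine mul_le_mul_of_nonneg_left h4 ?_
            have h2c : (0:ℝ) < (2:ℝ) ^ (-(c / 2)) := Real.rpow_pos_of_pos two_pos _
            positivity
        _ = (k₁ * 2 ^ (-(c / 2))) * (k₂ * (1 + y ^ 2) ^ (-(c' / 2))) := by ring
    linarith
  -- upper bound for the numerator
  have hN_ub : ∀ y : ℝ, 0 < y →
      (∫ r in Set.Ioi (a * y), p r * g (r - y)) ≤ C₂ * y ^ (1 - s) := by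
    intro y hy0
    have hay : 0 < a * y := mul_pos ha0 hy0
    have hslt : -s < -1 := by linarith
    have ptw : ∀ r ∈ Set.Ioi (a * y),
        p r * g (r - y) ≤ (K₁ * (K₂ * δ ^ (-c'))) * r ^ (-s) := by
      intro r hr
      rw [Set.mem_Ioi] at hr
      have hr0 : 0 < r := hay.trans hr
      have hry : δ * r ≤ r - y := by
        have hya : y < r / a := by rw [lt_div_iff₀ ha0]; linarith [hr]
        have hδr : δ * r = r - r / a := by rw [hδdef]; ring
        rw [hδr]; linarith
      have hδr0 : 0 < δ * r := mul_pos hδ hr0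
      have hp' : p r ≤ K₁ * r ^ (-c) := by
        refine (cred_le (fun x => (hP x).2) r).trans ?_
        have h := Real.rpow_le_rpow_of_nonpos (by positivity : (0:ℝ) < r ^ 2)
          (by linarith : r ^ 2 ≤ 1 + r ^ 2) (by linarith : -(c / 2) ≤ 0)
        calc K₁ * (1 + r ^ 2) ^ (-(c / 2)) ≤ K₁ * (r ^ 2) ^ (-(c / 2)) :=
              mul_le_mul_of_nonneg_left h hK₁.le
          _ = K₁ * r ^ (-c) := by
              rw [sq_rpow hr0.le, show 2 * (-(c / 2)) = -c by ring]
      have hg' : g (r - y) ≤ (K₂ * δ ^ (-c')) * r ^ (-c') := by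
        refine (cred_le (fun x => (hG x).2) (r - y)).trans ?_
        have h1 : (δ * r) ^ 2 ≤ 1 + (r - y) ^ 2 := by
          have := pow_le_pow_left₀ hδr0.le hry 2
          linarith
        have h2 : (1 + (r - y) ^ 2) ^ (-(c' / 2)) ≤ ((δ * r) ^ 2) ^ (-(c' / 2)) :=
          Real.rpow_le_rpow_of_nonpos (by positivity) h1 (by linarith)
        calc K₂ * (1 + (r - y) ^ 2) ^ (-(c' / 2)) ≤ K₂ * ((δ * r) ^ 2) ^ (-(c' / 2)) :=
              mul_le_mul_of_nonneg_left h2 hK₂.le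
          _ = (K₂ * δ ^ (-c')) * r ^ (-c') := by
              rw [sq_rpow hδr0.le, show 2 * (-(c' / 2)) = -c' by ring,
                Real.mul_rpow hδ.le hr0.le]
              ring
      have hrc : (0:ℝ) ≤ K₁ * r ^ (-c) := by positivity
      calc p r * g (r - y) ≤ (K₁ * r ^ (-c)) * ((K₂ * δ ^ (-c')) * r ^ (-c')) :=
            mul_le_mul hp' hg' (hg_pos _).le hrc
        _ = (K₁ * (K₂ * δ ^ (-c'))) * (r ^ (-c) * r ^ (-c')) := by ring
        _ = (K₁ * (K₂ * δ ^ (-c'))) * r ^ (-s) := by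
            rw [← Real.rpow_add hr0, show -c + -c' = -s by rw [hsdef]; ring]
    have mono := setIntegral_mono_on ((hInt y).integrableOn)
      ((integrableOn_Ioi_rpow_of_lt hslt hay).const_mul _) measurableSet_Ioi ptw
    have hval : ∫ r in Set.Ioi (a * y), (K₁ * (K₂ * δ ^ (-c'))) * r ^ (-s)
        = (K₁ * (K₂ * δ ^ (-c'))) * (-(a * y) ^ (-s + 1) / (-s + 1)) := by
      rw [integral_const_mul, integral_Ioi_rpow_of_lt hslt hay]
    have hval2 : (K₁ * (K₂ * δ ^ (-c'))) * (-(a * y) ^ (-s + 1) / (-s + 1))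
        = C₂ * y ^ (1 - s) := by
      rw [show (-s + 1 : ℝ) = 1 - s by ring, Real.mul_rpow ha0.le hy0.le, hC₂def,
        show (1 - s : ℝ) = -(s - 1) by ring, neg_div_neg_eq]
      ring
    calc (∫ r in Set.Ioi (a * y), p r * g (r - y))
        ≤ ∫ r in Set.Ioi (a * y), (K₁ * (K₂ * δ ^ (-c'))) * r ^ (-s) := mono
      _ = C₂ * y ^ (1 - s) := hval.trans hval2
  -- the key bound
  have key : ∀ ω : ℝ, ω ∈ Set.Ioo (0:ℝ) 1 →
      (∫ r in Set.Ioi (a * ω⁻¹), p r * g (r - ω⁻¹)) / (∫ r : ℝ, p r * g (r - ω⁻¹))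
        ≤ (C₂ / C₁) * (ω⁻¹) ^ (1 - c) := by
    intro ω hω
    have hω0 : 0 < ω := hω.1
    have hy0 : (0:ℝ) < ω⁻¹ := inv_pos.mpr hω0
    have hy1 : (1:ℝ) ≤ ω⁻¹ := by
      have hmul : ω * ω⁻¹ = 1 := mul_inv_cancel₀ hω0.ne'
      nlinarith [hω.2, hy0]
    have hN := hN_ub ω⁻¹ hy0
    have hD := hD_lb ω⁻¹ hy1
    have hDbpos : 0 < C₁ * (ω⁻¹ : ℝ) ^ (-c') := by
      have := Real.rpow_pos_of_pos hy0 (-c')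
      positivity
    have hNbnn : (0:ℝ) ≤ C₂ * (ω⁻¹ : ℝ) ^ (1 - s) := by
      have := Real.rpow_pos_of_pos hy0 (1 - s)
      positivity
    have hle := div_le_div₀ hNbnn hN hDbpos hD
    refine hle.trans (le_of_eq ?_)
    rw [mul_div_mul_comm, ← Real.rpow_sub hy0,
      show (1 - s) - (-c') = 1 - c by rw [hsdef]; ring]
  -- the bound tends to zero
  have hbt : Tendsto (fun ω : ℝ => (C₂ / C₁) * (ω⁻¹) ^ (1 - c))
      (nhdsWithin 0 (Set.Ioi 0)) (nhds 0) := by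
    have h1 : Tendsto (fun x : ℝ => x ^ (1 - c)) atTop (nhds 0) := by
      have := tendsto_rpow_neg_atTop (by linarith : (0:ℝ) < c - 1)
      simpa [show -(c - 1) = 1 - c by ring] using this
    have h2 : Tendsto (fun ω : ℝ => ω⁻¹) (nhdsWithin 0 (Set.Ioi 0)) atTop :=
      tendsto_inv_nhdsGT_zero
    have h3 := (h1.comp h2).const_mul (C₂ / C₁)
    simpa using h3
  refine squeeze_zero' ?_ ?_ hbt
  · filter_upwards [self_mem_nhdsWithin] with ω _
    exact div_nonneg
      (setIntegral_nonneg measurableSet_Ioi fun r _ =>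
        mul_nonneg (hp_pos r).le (hg_pos _).le)
      (integral_nonneg fun r => mul_nonneg (hp_pos r).le (hg_pos _).le)
  · filter_upwards [Ioo_mem_nhdsGT_of_mem (Set.left_mem_Ico.mpr one_pos)] with ω hω
    exact key ω hω
end

section
/- Let π and g be probability densities on ℝ with credences c and c' respectively, where 1 < c < c'. Define m(y) = ∫_ℝ π(r) g(r − y) dr and P(x | ω) = (m(ω^{−1}))^{−1} ∫_x^∞ π(r) g(r − ω^{−1}) dr. Then for every function cₒ: (0, ∞) → (0, ∞) satisfying ω · cₒ(ω) → ∞ as ω → 0⁺ (i.e., cₒ(ω) grows faster than ω^{−1}), lim_{ω → 0⁺} P(cₒ(ω) | ω) = 0. In particular, under priors with finite tail credence the posterior distribution of the distance cannot keep up with any function of the parallax that diverges faster than 1/ω. -/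
open MeasureTheory Filter

/-- If the prior density `p` has credence `c` and the location likelihood kernel `g` has
credence `c'` with `1 < c < c'`, then for every function `c₀ : (0, ∞) → (0, ∞)` growing
faster than `1/ω` (i.e. `ω · c₀(ω) → ∞` as `ω → 0⁺`), the posterior probability
`P(r > c₀(ω) | ω)` tends to `0` as the parallax `ω → 0⁺`. -/
theorem posterior_cannot_keep_up_with_fast_divergence
    (p g : ℝ → ℝ) (hp_meas : Measurable p) (hg_meas : Measurable g)
    (hp_prob : ∫ x : ℝ, p x = 1) (hg_prob : ∫ x : ℝ, g x = 1)
    (c c' : ℝ) (hc : 1 < c) (hcc' : c < c')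
    (hp_cred : HasCredence p c) (hg_cred : HasCredence g c') :
    ∀ c₀ : ℝ → ℝ, (∀ ω : ℝ, 0 < ω → 0 < c₀ ω) →
      Tendsto (fun ω : ℝ => ω * c₀ ω) (nhdsWithin 0 (Set.Ioi 0)) atTop →
      Tendsto (fun ω : ℝ =>
          (∫ r in Set.Ioi (c₀ ω), p r * g (r - ω⁻¹)) /
            (∫ r : ℝ, p r * g (r - ω⁻¹)))
        (nhdsWithin 0 (Set.Ioi 0)) (nhds 0) := by
  intro c₀ hc₀ htend
  obtain ⟨kp, Kp, hkp, hkKp, hpb⟩ := hp_cred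
  obtain ⟨kg, Kg, hkg, hkKg, hgb⟩ := hg_cred
  have hKp : 0 < Kp := hkp.trans_le hkKp
  have hKg : 0 < Kg := hkg.trans_le hkKg
  have hbase : ∀ x : ℝ, (0:ℝ) < 1 + x ^ 2 := fun x => by positivity
  have hpow_pos : ∀ (x e : ℝ), (0:ℝ) < (1 + x ^ 2) ^ e :=
    fun x e => Real.rpow_pos_of_pos (hbase x) e
  have hpow_one : ∀ x : ℝ, (1:ℝ) ≤ (1 + x ^ 2) ^ (c / 2) :=
    fun x => Real.one_le_rpow (by nlinarith [sq_nonneg x]) (by linarith)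
  have hpow_one' : ∀ x : ℝ, (1:ℝ) ≤ (1 + x ^ 2) ^ (c' / 2) :=
    fun x => Real.one_le_rpow (by nlinarith [sq_nonneg x]) (by linarith)
  have hp_pos : ∀ x, 0 < p x := fun x => by
    nlinarith [(hpb x).1, hpow_pos x (c/2), hpow_one x]
  have hg_pos : ∀ x, 0 < g x := fun x => by
    nlinarith [(hgb x).1, hpow_pos x (c'/2), hpow_one' x]
  have hp_upper : ∀ x, p x ≤ Kp * (1 + x ^ 2) ^ (-(c / 2)) := fun x => by
    rw [Real.rpow_neg (hbase x).le, mul_comm, ← div_eq_inv_mul]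
    exact (le_div_iff₀ (hpow_pos x (c/2))).2 (by rw [mul_comm]; exact (hpb x).2)
  have hg_upper : ∀ x, g x ≤ Kg * (1 + x ^ 2) ^ (-(c' / 2)) := fun x => by
    rw [Real.rpow_neg (hbase x).le, mul_comm, ← div_eq_inv_mul]
    exact (le_div_iff₀ (hpow_pos x (c'/2))).2 (by rw [mul_comm]; exact (hgb x).2)
  have hp_lower : ∀ x, kp * (1 + x ^ 2) ^ (-(c / 2)) ≤ p x := fun x => by
    rw [Real.rpow_neg (hbase x).le, mul_comm, ← div_eq_inv_mul]
    exact (div_le_iff₀ (hpow_pos x (c/2))).2 (by rw [mul_comm]; exact (hpb x).1)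
  have hg_lower : ∀ x, kg * (1 + x ^ 2) ^ (-(c' / 2)) ≤ g x := fun x => by
    rw [Real.rpow_neg (hbase x).le, mul_comm, ← div_eq_inv_mul]
    exact (div_le_iff₀ (hpow_pos x (c'/2))).2 (by rw [mul_comm]; exact (hgb x).1)
  -- for r > 0, (1+r²)^(-(c/2)) ≤ r^(-c)
  have hpow2 : ∀ (r e : ℝ), 0 ≤ r → (r ^ 2 : ℝ) ^ (-(e / 2)) = r ^ (-e) := by
    intro r e hr
    rw [← Real.rpow_natCast r 2, ← Real.rpow_mul hr]
    congr 1
    push_cast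
    ring
  have hsq : ∀ (r e : ℝ), 0 < r → 0 < e → (1 + r ^ 2) ^ (-(e / 2)) ≤ r ^ (-e) := by
    intro r e hr he
    rw [← hpow2 r e hr.le]
    exact Real.rpow_le_rpow_of_nonpos (by positivity) (by nlinarith) (by linarith)
  -- integrability
  have hg_int : Integrable g := by
    by_contra h
    rw [integral_undef h] at hg_prob
    norm_num at hg_prob
  have hpg_int : ∀ y : ℝ, Integrable (fun r => p r * g (r - y)) := by
    intro y
    refine Integrable.bdd_mul (hg_int.comp_sub_right y) hp_meas.aestronglyMeasurable (c := Kp) (ae_of_all _ fun x => ?_)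
    rw [Real.norm_eq_abs, abs_of_pos (hp_pos x)]
    nlinarith [(hpb x).2, hpow_one x, hp_pos x]
  have hpg_nonneg : ∀ y r : ℝ, 0 ≤ p r * g (r - y) :=
    fun y r => mul_nonneg (hp_pos r).le (hg_pos _).le
  -- constants
  set A : ℝ := Kp * Kg * 2 ^ c' with hA
  set D : ℝ := kp * (5:ℝ) ^ (-(c/2)) * (kg * (2:ℝ) ^ (-(c'/2))) with hD
  have hA_pos : 0 < A := by positivity
  have hD_pos : 0 < D := by positivity
  set s : ℝ := 1 - c - c' with hs
  have hs_neg : s < 0 := by simp [hs]; linarith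
  -- denominator lower bound
  have hden : ∀ y : ℝ, 1 ≤ y → D * y ^ (-c) ≤ ∫ r : ℝ, p r * g (r - y) := by
    intro y hy1
    have hy0 : (0:ℝ) < y := lt_of_lt_of_le one_pos hy1
    have step1 : (∫ r in Set.Ioc y (y+1), p r * g (r - y)) ≤ ∫ r : ℝ, p r * g (r - y) :=
      setIntegral_le_integral (hpg_int y) (ae_of_all _ (hpg_nonneg y))
    refine le_trans ?_ step1
    have step2 : (∫ _r in Set.Ioc y (y+1), D * y ^ (-c)) ≤
        ∫ r in Set.Ioc y (y+1), p r * g (r - y) := by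
      refine setIntegral_mono_on ?_ ((hpg_int y).integrableOn) measurableSet_Ioc ?_
      · exact integrableOn_const measure_Ioc_lt_top.ne
      · intro r hr
        obtain ⟨hr1, hr2⟩ := hr
        have hr0 : 0 < r := lt_trans hy0 hr1
        have hp_ge : kp * (5:ℝ) ^ (-(c/2)) * y ^ (-c) ≤ p r := by
          refine le_trans ?_ (hp_lower r)
          rw [mul_assoc]
          refine mul_le_mul_of_nonneg_left ?_ hkp.le
          have h5 : (5 * y ^ 2 : ℝ) ^ (-(c/2)) ≤ (1 + r ^ 2) ^ (-(c/2)) := by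
            refine Real.rpow_le_rpow_of_nonpos (hbase r) ?_ (by linarith)
            nlinarith
          refine le_trans (le_of_eq ?_) h5
          rw [Real.mul_rpow (by norm_num) (by positivity), hpow2 y c hy0.le]
        have hg_ge : kg * (2:ℝ) ^ (-(c'/2)) ≤ g (r - y) := by
          refine le_trans ?_ (hg_lower (r - y))
          refine mul_le_mul_of_nonneg_left ?_ hkg.le
          refine Real.rpow_le_rpow_of_nonpos (hbase (r - y)) ?_ (by linarith)
          nlinarith
        calc D * y ^ (-c) = (kp * (5:ℝ) ^ (-(c/2)) * y ^ (-c)) * (kg * (2:ℝ) ^ (-(c'/2))) := by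
              rw [hD]; ring
          _ ≤ p r * g (r - y) := by
              refine mul_le_mul hp_ge hg_ge (by positivity) (hp_pos r).le
    refine le_trans (le_of_eq ?_) step2
    rw [setIntegral_const]
    rw [Real.volume_real_Ioc]
    norm_num
  -- numerator upper bound
  have hnum : ∀ x y : ℝ, 1 ≤ y → 2 * y ≤ x →
      (∫ r in Set.Ioi x, p r * g (r - y)) ≤ A * (x ^ (s) / (c + c' - 1)) := by
    intro x y hy1 hxy
    have hy0 : (0:ℝ) < y := lt_of_lt_of_le one_pos hy1
    have hx0 : (0:ℝ) < x := by linarith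
    have hexp : -(c + c') < -1 := by linarith
    have hIntDom : IntegrableOn (fun r : ℝ => A * r ^ (-(c + c'))) (Set.Ioi x) := by
      exact (integrableOn_Ioi_rpow_of_lt hexp hx0).const_mul A
    have step : (∫ r in Set.Ioi x, p r * g (r - y)) ≤
        ∫ r in Set.Ioi x, A * r ^ (-(c + c')) := by
      refine setIntegral_mono_on ((hpg_int y).integrableOn) hIntDom measurableSet_Ioi ?_
      intro r hr
      have hr' : x < r := hr
      have hr0 : 0 < r := lt_trans hx0 hr'
      have hry : r / 2 ≤ r - y := by linarith
      have hry0 : 0 < r - y := by linarith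
      have hpr : p r ≤ Kp * r ^ (-c) :=
        (hp_upper r).trans (mul_le_mul_of_nonneg_left (hsq r c hr0 (by linarith)) hKp.le)
      have hgr : g (r - y) ≤ Kg * (2 ^ c' * r ^ (-c')) := by
        refine (hg_upper (r - y)).trans (mul_le_mul_of_nonneg_left ?_ hKg.le)
        refine le_trans (hsq (r - y) c' hry0 (by linarith)) ?_
        have h2 : (r - y) ^ (-c') ≤ (r / 2) ^ (-c') :=
          Real.rpow_le_rpow_of_nonpos (by linarith) hry (by linarith)
        refine h2.trans (le_of_eq ?_)
        rw [Real.div_rpow hr0.le (by norm_num), Real.rpow_neg (by norm_num : (0:ℝ) ≤ 2)]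
        field_simp
      calc p r * g (r - y) ≤ (Kp * r ^ (-c)) * (Kg * (2 ^ c' * r ^ (-c'))) := by
            refine mul_le_mul hpr hgr (hg_pos _).le (by positivity)
        _ = A * (r ^ (-c) * r ^ (-c')) := by rw [hA]; ring
        _ = A * r ^ (-(c + c')) := by
            rw [← Real.rpow_add hr0]; ring_nf
    refine step.trans (le_of_eq ?_)
    rw [integral_const_mul, integral_Ioi_rpow_of_lt hexp hx0]
    congr 1
    rw [show -(c + c') + 1 = s by rw [hs]; ring, neg_div, ← div_neg]
    congr 1
    rw [hs]; ring
  -- squeeze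
  set C : ℝ := A / ((c + c' - 1) * D) with hC
  have hC_pos : 0 < C := by
    apply div_pos hA_pos
    apply mul_pos (by linarith) hD_pos
  have hlim : Tendsto (fun ω : ℝ => C * (ω * c₀ ω) ^ s) (nhdsWithin 0 (Set.Ioi 0)) (nhds 0) := by
    have h1 : Tendsto (fun t : ℝ => t ^ (-(c + c' - 1))) atTop (nhds 0) :=
      tendsto_rpow_neg_atTop (by linarith)
    have h2 := (h1.comp htend).const_mul C
    rw [mul_zero] at h2
    have hseq : s = -(c + c' - 1) := by rw [hs]; ring
    simpa only [Function.comp_def, hseq] using h2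
  refine squeeze_zero' ?_ ?_ hlim
  · filter_upwards [self_mem_nhdsWithin] with ω hω
    exact div_nonneg (integral_nonneg (hpg_nonneg _)) (integral_nonneg (hpg_nonneg _))
  · filter_upwards [self_mem_nhdsWithin,
      Ioc_mem_nhdsGT_of_mem (show (0:ℝ) ∈ Set.Ico (0:ℝ) 1 by norm_num),
      htend.eventually (eventually_ge_atTop 2)] with ω hω hω1 ht
    have hω0 : (0:ℝ) < ω := hω
    set y : ℝ := ω⁻¹ with hy
    set x : ℝ := c₀ ω with hx
    set t : ℝ := ω * x with htdef
    have hy1 : (1:ℝ) ≤ y := by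
      rw [hy]
      nlinarith [mul_inv_cancel₀ hω0.ne', inv_pos.2 hω0, hω1.2]
    have hy0 : (0:ℝ) < y := lt_of_lt_of_le one_pos hy1
    have ht2 : (2:ℝ) ≤ t := ht
    have hxty : x = t * y := by
      rw [htdef, hy]
      field_simp
    have hxy : 2 * y ≤ x := by
      rw [hxty]
      nlinarith
    have hcc1 : (0:ℝ) < c + c' - 1 := by linarith
    have hx0 : (0:ℝ) < x := hc₀ ω hω0
    have hbound := div_le_div₀
      (mul_nonneg hA_pos.le (div_nonneg (Real.rpow_nonneg hx0.le s) hcc1.le))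
      (hnum x y hy1 hxy) (by positivity) (hden y hy1)
    refine hbound.trans ?_
    have heq : A * (x ^ s / (c + c' - 1)) / (D * y ^ (-c)) = C * (x ^ s * y ^ c) := by
      rw [hC, Real.rpow_neg hy0.le]
      have hyc : (0:ℝ) < y ^ c := Real.rpow_pos_of_pos hy0 c
      field_simp
    rw [heq, hxty, Real.mul_rpow (by linarith : (0:ℝ) ≤ t) hy0.le]
    have hycol : y ^ s * y ^ c = y ^ (s + c) := (Real.rpow_add hy0 s c).symm
    have hsc : s + c = 1 - c' := by rw [hs]; ring
    have hyle : y ^ (s + c) ≤ 1 := by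
      rw [hsc]
      exact Real.rpow_le_one_of_one_le_of_nonpos hy1 (by linarith)
    have hts : (0:ℝ) < t ^ s := Real.rpow_pos_of_pos (by linarith) s
    have hynn : (0:ℝ) ≤ y ^ (s+c) := Real.rpow_nonneg hy0.le _
    calc C * (t ^ s * y ^ s * y ^ c) = C * (t ^ s * (y ^ s * y ^ c)) := by ring
      _ = C * (t ^ s * y ^ (s + c)) := by rw [hycol]
      _ ≤ C * (t ^ s * 1) := by
          refine mul_le_mul_of_nonneg_left ?_ hC_pos.le
          exact mul_le_mul_of_nonneg_left hyle hts.le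
      _ = C * t ^ s := by ring
end

section
/- Let π and g be probability densities on ℝ with credences c and c' respectively, where 1 < c < c'. Then the marginal density m(y) = ∫_ℝ π(r) g(r − y) dr has credence c = min(c, c'): there exist constants 0 < k ≤ K such that k (1 + y²)^{−c/2} ≤ m(y) ≤ K (1 + y²)^{−c/2} for all y ∈ ℝ. -/
open MeasureTheory Real Set

private lemma jb_integrable {c : ℝ} (hc : 1 < c) :
    Integrable (fun x : ℝ => (1 + x ^ 2) ^ (-(c / 2))) := by
  have h := integrable_rpow_neg_one_add_norm_sq (E := ℝ) (μ := volume) (r := c)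
    (by simpa using hc)
  have : (fun x : ℝ => ((1 : ℝ) + ‖x‖ ^ 2) ^ (-c / 2)) =
      (fun x : ℝ => (1 + x ^ 2) ^ (-(c / 2))) := by
    funext x; rw [Real.norm_eq_abs, sq_abs, neg_div]
  rwa [this] at h

private lemma div4_rpow {a z : ℝ} (ha : 0 ≤ a) : (a / 4) ^ (-z) = 4 ^ z * a ^ (-z) := by
  rw [Real.div_rpow ha (by norm_num), Real.rpow_neg (by norm_num : (0:ℝ) ≤ 4) z,
    div_eq_mul_inv, inv_inv, mul_comm]

private lemma cred_bounds {f : ℝ → ℝ} {c k K : ℝ}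
    (h : ∀ x, k ≤ (1 + x ^ 2) ^ (c / 2) * f x ∧ (1 + x ^ 2) ^ (c / 2) * f x ≤ K) (x : ℝ) :
    k * (1 + x ^ 2) ^ (-(c / 2)) ≤ f x ∧ f x ≤ K * (1 + x ^ 2) ^ (-(c / 2)) := by
  have hb : (0:ℝ) < 1 + x ^ 2 := by positivity
  have hpos : (0:ℝ) < (1 + x ^ 2) ^ (c / 2) := Real.rpow_pos_of_pos hb _
  have hinv : (1 + x ^ 2) ^ (-(c / 2)) = ((1 + x ^ 2) ^ (c / 2))⁻¹ := Real.rpow_neg hb.le _ ▸ rfl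
  obtain ⟨h1, h2⟩ := h x
  constructor
  · rw [hinv, mul_inv_le_iff₀ hpos]
    linarith [h1]
  · rw [hinv, le_mul_inv_iff₀ hpos]
    linarith [h2]

set_option maxHeartbeats 1000000 in
/-- If the prior density `p` has credence `c` and the location likelihood kernel `g` has
credence `c'` with `1 < c < c'`, then the marginal density `m(y) = ∫ p(r) g(r - y) dr` has
credence `min(c, c') = c`. -/
theorem marginal_has_min_credence
    (p g : ℝ → ℝ) (hp_meas : Measurable p) (hg_meas : Measurable g)
    (hp_prob : ∫ x : ℝ, p x = 1) (hg_prob : ∫ x : ℝ, g x = 1)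
    (c c' : ℝ) (hc : 1 < c) (hcc' : c < c')
    (hp_cred : HasCredence p c) (hg_cred : HasCredence g c') :
    ∃ k K : ℝ, 0 < k ∧ k ≤ K ∧
      ∀ y : ℝ, k * (1 + y ^ 2) ^ (-c / 2) ≤ (∫ r : ℝ, p r * g (r - y)) ∧
        (∫ r : ℝ, p r * g (r - y)) ≤ K * (1 + y ^ 2) ^ (-c / 2) := by
  obtain ⟨k₁, K₁, hk₁, hk₁K₁, hp⟩ := hp_cred
  obtain ⟨k₂, K₂, hk₂, hk₂K₂, hg⟩ := hg_cred
  have hc' : 1 < c' := hc.trans hcc'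
  have hpb := cred_bounds hp
  have hgb := cred_bounds hg
  have hK₁ : 0 < K₁ := hk₁.trans_le hk₁K₁
  have hK₂ : 0 < K₂ := hk₂.trans_le hk₂K₂
  have hpnn : ∀ x, 0 ≤ p x := fun x =>
    le_trans (by positivity) (hpb x).1
  have hgnn : ∀ x, 0 ≤ g x := fun x =>
    le_trans (by positivity) (hgb x).1
  -- integrability of p and g
  have hp_int : Integrable p := by
    refine ((jb_integrable hc).const_mul K₁).mono' (hp_meas.aestronglyMeasurable)
      (Filter.Eventually.of_forall fun x => ?_)
    rw [Real.norm_eq_abs, abs_of_nonneg (hpnn x)]; exact (hpb x).2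
  have hg_int : Integrable g := by
    refine ((jb_integrable hc').const_mul K₂).mono' (hg_meas.aestronglyMeasurable)
      (Filter.Eventually.of_forall fun x => ?_)
    rw [Real.norm_eq_abs, abs_of_nonneg (hgnn x)]; exact (hgb x).2
  -- p is bounded by K₁
  have hp_bdd : ∀ x, p x ≤ K₁ := by
    intro x
    have h1 : (1:ℝ) ≤ (1 + x ^ 2) ^ (c / 2) :=
      Real.one_le_rpow (by nlinarith [sq_nonneg x]) (by linarith)
    nlinarith [(hp x).2, hpnn x]
  -- integrand integrable
  have h_int : ∀ y : ℝ, Integrable (fun r => p r * g (r - y)) := by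
    intro y
    refine ((hg_int.comp_sub_right y).const_mul K₁).mono'
      (hp_meas.mul (hg_meas.comp (measurable_id.sub measurable_const))).aestronglyMeasurable
      (Filter.Eventually.of_forall fun r => ?_)
    rw [Real.norm_eq_abs, abs_of_nonneg (mul_nonneg (hpnn r) (hgnn _))]
    exact mul_le_mul_of_nonneg_right (hp_bdd r) (hgnn _)
  have h_int_nn : ∀ y : ℝ, ∀ r : ℝ, 0 ≤ p r * g (r - y) := fun y r =>
    mul_nonneg (hpnn r) (hgnn _)
  -- mass of g on [-1,1]
  set Ig : ℝ := ∫ u in Icc (-1:ℝ) 1, g u with hIg_def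
  have hIg_pos : 0 < Ig := by
    have h1 : ∫ u in Icc (-1:ℝ) 1, (k₂ * 2 ^ (-(c' / 2)) : ℝ) ≤ Ig := by
      refine setIntegral_mono_on (integrableOn_const measure_Icc_lt_top.ne)
        hg_int.integrableOn measurableSet_Icc fun u hu => ?_
      have hu2 : (1:ℝ) + u ^ 2 ≤ 2 := by
        rcases hu with ⟨h1, h2⟩; nlinarith
      calc k₂ * 2 ^ (-(c' / 2)) ≤ k₂ * (1 + u ^ 2) ^ (-(c' / 2)) := by
            apply mul_le_mul_of_nonneg_left _ hk₂.le
            exact Real.rpow_le_rpow_of_nonpos (by positivity) hu2 (by linarith)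
        _ ≤ g u := (hgb u).1
    have h2 : ∫ u in Icc (-1:ℝ) 1, (k₂ * 2 ^ (-(c' / 2)) : ℝ) =
        2 * (k₂ * 2 ^ (-(c' / 2))) := by
      rw [setIntegral_const, Real.volume_real_Icc, smul_eq_mul]
      norm_num
    have : (0:ℝ) < 2 * (k₂ * 2 ^ (-(c' / 2))) := by positivity
    linarith [h1, h2 ▸ h1]
  have hIg_le : Ig ≤ 1 := by
    rw [← hg_prob]
    exact setIntegral_le_integral hg_int (Filter.Eventually.of_forall hgnn)
  -- constants
  set k : ℝ := k₁ * 3 ^ (-(c / 2)) * Ig with hk_def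
  set K₀ : ℝ := K₁ * 4 ^ (c / 2) + K₂ * 4 ^ (c' / 2) with hK₀_def
  have hk_pos : 0 < k := by positivity
  have hK₀_pos : 0 < K₀ := by positivity
  refine ⟨k, K₀ + k, hk_pos, by linarith, fun y => ?_⟩
  have hby : (0:ℝ) < 1 + y ^ 2 := by positivity
  have hrpy : (0:ℝ) < (1 + y ^ 2) ^ (-(c / 2)) := Real.rpow_pos_of_pos hby _
  rw [neg_div]
  constructor
  -- LOWER BOUND
  · have hshift : ∫ r in Icc (y - 1) (y + 1), g (r - y) = Ig := by
      have e1 : ∫ r in Icc (y - 1) (y + 1), g (r - y) =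
          ∫ r : ℝ, (Icc (-1:ℝ) 1).indicator g (r - y) := by
        rw [← integral_indicator measurableSet_Icc]
        congr 1
        funext r
        simp only [indicator_apply, mem_Icc]
        have h : (y - 1 ≤ r ∧ r ≤ y + 1) ↔ (-1 ≤ r - y ∧ r - y ≤ 1) := by
          constructor <;> rintro ⟨h1, h2⟩ <;> constructor <;> linarith
        rw [if_congr h rfl rfl]
      rw [e1, integral_sub_right_eq_self ((Icc (-1:ℝ) 1).indicator g) y,
        integral_indicator measurableSet_Icc]
    have step1 : ∫ r in Icc (y - 1) (y + 1),
        (k₁ * 3 ^ (-(c / 2)) * (1 + y ^ 2) ^ (-(c / 2))) * g (r - y) ≤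
        ∫ r in Icc (y - 1) (y + 1), p r * g (r - y) := by
      refine setIntegral_mono_on
        (((hg_int.comp_sub_right y).const_mul _).integrableOn)
        ((h_int y).integrableOn) measurableSet_Icc fun r hr => ?_
      refine mul_le_mul_of_nonneg_right ?_ (hgnn _)
      have hrb : (1:ℝ) + r ^ 2 ≤ 3 * (1 + y ^ 2) := by
        rcases hr with ⟨h1, h2⟩
        nlinarith [mul_nonneg (by linarith : (0:ℝ) ≤ r - (y - 1))
          (by linarith : (0:ℝ) ≤ y + 1 - r), sq_nonneg (r - 2 * y)]
      calc k₁ * 3 ^ (-(c / 2)) * (1 + y ^ 2) ^ (-(c / 2))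
          = k₁ * (3 * (1 + y ^ 2)) ^ (-(c / 2)) := by
            rw [Real.mul_rpow (by norm_num) hby.le]; ring
        _ ≤ k₁ * (1 + r ^ 2) ^ (-(c / 2)) := by
            apply mul_le_mul_of_nonneg_left _ hk₁.le
            exact Real.rpow_le_rpow_of_nonpos (by positivity) hrb (by linarith)
        _ ≤ p r := (hpb r).1
    have step2 : ∫ r in Icc (y - 1) (y + 1), p r * g (r - y) ≤
        ∫ r : ℝ, p r * g (r - y) :=
      setIntegral_le_integral (h_int y) (Filter.Eventually.of_forall (h_int_nn y))
    have step0 : ∫ r in Icc (y - 1) (y + 1),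
        (k₁ * 3 ^ (-(c / 2)) * (1 + y ^ 2) ^ (-(c / 2))) * g (r - y) =
        k * (1 + y ^ 2) ^ (-(c / 2)) := by
      rw [integral_const_mul, hshift, hk_def]; ring
    linarith [step0 ▸ step1, step2]
  -- UPPER BOUND
  · set s : Set ℝ := {r : ℝ | y ^ 2 ≤ 4 * r ^ 2} with hs_def
    have hs_meas : MeasurableSet s :=
      measurableSet_le measurable_const ((measurable_id.pow_const 2).const_mul 4)
    have hsplit : (∫ r : ℝ, p r * g (r - y)) =
        (∫ r in s, p r * g (r - y)) + ∫ r in sᶜ, p r * g (r - y) :=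
      (integral_add_compl hs_meas (h_int y)).symm
    -- bound on s
    have hbound_s : ∫ r in s, p r * g (r - y) ≤
        K₁ * 4 ^ (c / 2) * (1 + y ^ 2) ^ (-(c / 2)) := by
      have h1 : ∫ r in s, p r * g (r - y) ≤
          ∫ r in s, (K₁ * 4 ^ (c / 2) * (1 + y ^ 2) ^ (-(c / 2))) * g (r - y) := by
        refine setIntegral_mono_on ((h_int y).integrableOn)
          (((hg_int.comp_sub_right y).const_mul _).integrableOn) hs_meas fun r hr => ?_
        refine mul_le_mul_of_nonneg_right ?_ (hgnn _)
        have hr' : y ^ 2 ≤ 4 * r ^ 2 := hr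
        have hrb : (1 + y ^ 2) / 4 ≤ 1 + r ^ 2 := by nlinarith
        calc p r ≤ K₁ * (1 + r ^ 2) ^ (-(c / 2)) := (hpb r).2
          _ ≤ K₁ * ((1 + y ^ 2) / 4) ^ (-(c / 2)) := by
              apply mul_le_mul_of_nonneg_left _ hK₁.le
              exact Real.rpow_le_rpow_of_nonpos (by positivity) hrb (by linarith)
          _ = K₁ * 4 ^ (c / 2) * (1 + y ^ 2) ^ (-(c / 2)) := by
              rw [div4_rpow hby.le]; ring
      have h2 : ∫ r in s, (K₁ * 4 ^ (c / 2) * (1 + y ^ 2) ^ (-(c / 2))) * g (r - y) ≤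
          K₁ * 4 ^ (c / 2) * (1 + y ^ 2) ^ (-(c / 2)) := by
        rw [integral_const_mul]
        have h3 : ∫ r in s, g (r - y) ≤ 1 := by
          rw [← hg_prob, ← integral_sub_right_eq_self g y]
          exact setIntegral_le_integral (hg_int.comp_sub_right y)
            (Filter.Eventually.of_forall fun r => hgnn _)
        have h5 : (0:ℝ) ≤ K₁ * 4 ^ (c / 2) * (1 + y ^ 2) ^ (-(c / 2)) := by positivity
        exact mul_le_of_le_one_right h5 h3
      linarith
    -- bound on sᶜ
    have hbound_sc : ∫ r in sᶜ, p r * g (r - y) ≤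
        K₂ * 4 ^ (c' / 2) * (1 + y ^ 2) ^ (-(c / 2)) := by
      have h1 : ∫ r in sᶜ, p r * g (r - y) ≤
          ∫ r in sᶜ, p r * (K₂ * 4 ^ (c' / 2) * (1 + y ^ 2) ^ (-(c / 2))) := by
        refine setIntegral_mono_on ((h_int y).integrableOn)
          ((hp_int.mul_const _).integrableOn) hs_meas.compl fun r hr => ?_
        refine mul_le_mul_of_nonneg_left ?_ (hpnn r)
        have hr' : ¬ (y ^ 2 ≤ 4 * r ^ 2) := hr
        have hry : y ^ 2 ≤ 4 * (r - y) ^ 2 := by nlinarith [sq_nonneg (y - 2 * r)]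
        have hrb : (1 + y ^ 2) / 4 ≤ 1 + (r - y) ^ 2 := by nlinarith
        calc g (r - y) ≤ K₂ * (1 + (r - y) ^ 2) ^ (-(c' / 2)) := (hgb _).2
          _ ≤ K₂ * ((1 + y ^ 2) / 4) ^ (-(c' / 2)) := by
              apply mul_le_mul_of_nonneg_left _ hK₂.le
              exact Real.rpow_le_rpow_of_nonpos (by positivity) hrb (by linarith)
          _ = K₂ * 4 ^ (c' / 2) * ((1 + y ^ 2)) ^ (-(c' / 2)) := by
              rw [div4_rpow hby.le]; ring
          _ ≤ K₂ * 4 ^ (c' / 2) * ((1 + y ^ 2)) ^ (-(c / 2)) := by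
              apply mul_le_mul_of_nonneg_left _ (by positivity)
              apply Real.rpow_le_rpow_of_exponent_le (by nlinarith [sq_nonneg y])
              linarith
      have h2 : ∫ r in sᶜ, p r * (K₂ * 4 ^ (c' / 2) * (1 + y ^ 2) ^ (-(c / 2))) ≤
          K₂ * 4 ^ (c' / 2) * (1 + y ^ 2) ^ (-(c / 2)) := by
        rw [integral_mul_const]
        have h3 : ∫ r in sᶜ, p r ≤ 1 := by
          rw [← hp_prob]
          exact setIntegral_le_integral hp_int (Filter.Eventually.of_forall hpnn)
        have h5 : (0:ℝ) ≤ K₂ * 4 ^ (c' / 2) * (1 + y ^ 2) ^ (-(c / 2)) := by positivity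
        exact mul_le_of_le_one_left h5 h3
      linarith
    have : (K₀ + k) * (1 + y ^ 2) ^ (-(c / 2)) =
        K₁ * 4 ^ (c / 2) * (1 + y ^ 2) ^ (-(c / 2)) +
        K₂ * 4 ^ (c' / 2) * (1 + y ^ 2) ^ (-(c / 2)) + k * (1 + y ^ 2) ^ (-(c / 2)) := by
      rw [hK₀_def]; ring
    rw [hsplit, this]
    nlinarith [hbound_s, hbound_sc, mul_pos hk_pos hrpy]
end

section
/- If X and Y are independent random variables, each with the standard half-Cauchy distribution, then the product XY has density f(r) = (4/π²) · log(r)/(r² − 1) for r ∈ (0, ∞) \ {1} (with the value 2/π² at r = 1 giving the continuous version); equivalently, for every r > 0 with r ≠ 1, ∫_0^∞ (2/(π(1+x²))) · (2/(π(1+(r/x)²))) · (1/x) dx = (4/π²) · log(r)/(r² − 1). -/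
open MeasureTheory

set_option maxHeartbeats 1000000

/-- Density of the product of two independent standard half-Cauchy random variables: for every
`r > 0` with `r ≠ 1`, the product-density integral
`∫_0^∞ (2/(π(1+x²))) (2/(π(1+(r/x)²))) (1/x) dx` equals `(4/π²) log(r)/(r² - 1)`. -/
theorem product_halfCauchy_density (r : ℝ) (hr : 0 < r) (hr1 : r ≠ 1) :
    (∫ x in Set.Ioi (0 : ℝ),
        (2 / (Real.pi * (1 + x ^ 2))) * (2 / (Real.pi * (1 + (r / x) ^ 2))) * (1 / x)) =
      (4 / Real.pi ^ 2) * Real.log r / (r ^ 2 - 1) := by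
  have hc : r ^ 2 - 1 ≠ 0 := by
    have : r ^ 2 - 1 = (r - 1) * (r + 1) := by ring
    rw [this]
    exact mul_ne_zero (sub_ne_zero.mpr hr1) (by linarith)
  set g : ℝ → ℝ := fun x => (Real.log (1 + x ^ 2) - Real.log (x ^ 2 + r ^ 2)) / (2 * (r ^ 2 - 1)) with hg
  set g' : ℝ → ℝ := fun x => x / ((1 + x ^ 2) * (x ^ 2 + r ^ 2)) with hg'
  have h2 : ∀ x : ℝ, 0 < x ^ 2 + r ^ 2 := fun x => by positivity
  have h1 : ∀ x : ℝ, 0 < 1 + x ^ 2 := fun x => by positivity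
  have hderiv : ∀ x ∈ Set.Ici (0:ℝ), HasDerivAt g (g' x) x := by
    intro x _
    have d1 : HasDerivAt (fun x : ℝ => 1 + x ^ 2) (2 * x) x := by
      simpa using (hasDerivAt_pow 2 x).const_add 1
    have d2 : HasDerivAt (fun x : ℝ => x ^ 2 + r ^ 2) (2 * x) x := by
      simpa using (hasDerivAt_pow 2 x).add_const (r ^ 2)
    have l1 := (Real.hasDerivAt_log (h1 x).ne').comp x d1
    have l2 := (Real.hasDerivAt_log (h2 x).ne').comp x d2
    have := (l1.sub l2).div_const (2 * (r ^ 2 - 1))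
    refine this.congr_deriv ?_
    show _ = x / ((1 + x ^ 2) * (x ^ 2 + r ^ 2))
    rw [eq_comm, div_eq_div_iff (mul_ne_zero (h1 x).ne' (h2 x).ne') (mul_ne_zero two_ne_zero hc)]
    field_simp
    ring
  have hpos : ∀ x ∈ Set.Ioi (0:ℝ), 0 ≤ g' x := by
    intro x hx
    simp only [hg']
    exact div_nonneg (le_of_lt hx) (by positivity)
  have htend : Filter.Tendsto g Filter.atTop (nhds 0) := by
    have hratio : Filter.Tendsto (fun x : ℝ => (1 + x ^ 2) / (x ^ 2 + r ^ 2)) Filter.atTop (nhds 1) := by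
      have hinv : Filter.Tendsto (fun x : ℝ => (x ^ 2)⁻¹) Filter.atTop (nhds 0) :=
        (Filter.tendsto_pow_atTop (by norm_num)).inv_tendsto_atTop
      have hnum : Filter.Tendsto (fun x : ℝ => (x ^ 2)⁻¹ + 1) Filter.atTop (nhds 1) := by
        simpa using hinv.add_const 1
      have hden : Filter.Tendsto (fun x : ℝ => 1 + r ^ 2 * (x ^ 2)⁻¹) Filter.atTop (nhds 1) := by
        simpa using (hinv.const_mul (r ^ 2)).const_add 1
      have := hnum.div hden one_ne_zero
      refine Filter.Tendsto.congr' ?_ (by simpa using this)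
      filter_upwards [Filter.eventually_gt_atTop (0:ℝ)] with x hx
      have hx2 : (x:ℝ) ^ 2 ≠ 0 := by positivity
      have hx2' : (x:ℝ) ≠ 0 := ne_of_gt hx
      simp only [Pi.div_apply]
      rw [div_eq_div_iff (by positivity) (by positivity)]
      field_simp
    have hlog : Filter.Tendsto (fun x : ℝ => Real.log ((1 + x ^ 2) / (x ^ 2 + r ^ 2))) Filter.atTop (nhds 0) := by
      have := (Real.continuousAt_log one_ne_zero).tendsto.comp hratio
      simpa [Function.comp_def] using this
    have : Filter.Tendsto (fun x : ℝ => Real.log ((1 + x ^ 2) / (x ^ 2 + r ^ 2)) / (2 * (r ^ 2 - 1))) Filter.atTop (nhds 0) := by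
      simpa using hlog.div_const (2 * (r ^ 2 - 1))
    refine this.congr fun x => ?_
    rw [Real.log_div (h1 x).ne' (h2 x).ne']
  have key := integral_Ioi_of_hasDerivAt_of_nonneg' hderiv hpos htend
  have hπ : Real.pi ≠ 0 := Real.pi_ne_zero
  have hEq : ∀ x ∈ Set.Ioi (0:ℝ),
      (2 / (Real.pi * (1 + x ^ 2))) * (2 / (Real.pi * (1 + (r / x) ^ 2))) * (1 / x)
        = (4 / Real.pi ^ 2) * g' x := by
    intro x hx
    have hx0 : x ≠ 0 := (ne_of_gt hx)
    have e1 : 1 + (r / x) ^ 2 = (x ^ 2 + r ^ 2) / x ^ 2 := by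
      field_simp
    rw [hg', e1]
    field_simp
    ring
  rw [setIntegral_congr_fun measurableSet_Ioi hEq, integral_const_mul, key]
  have hg0 : g 0 = - Real.log r / (r ^ 2 - 1) := by
    simp only [hg]
    norm_num
    field_simp
  rw [hg0]
  field_simp
  ring
end
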